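/- Let E be a vector space over ℝ (or ℂ) equipped with a family of seminorms (‖·‖_λ)_{0<λ<1} that is monotone: ‖x‖_λ ≤ ‖x‖_{λ′} whenever λ ≤ λ′. Fix ε ∈ (0,1), let n ≥ 1, let φ be a plane rooted full binary tree with n leaves, and let g₁,…,g_{n−1} : E × E → E be bilinear maps assigned to the internal nodes of φ such that for all x, y ∈ E and all λ, λ′ with 1−ε ≤ λ < λ′ < 1: (λ′−λ)·‖g_i(x,y)‖_λ ≤ c_i·‖x‖_{λ′}·‖y‖_{λ′}, with constants c_i ≥ 0. Then for all λ, λ′ with 1−ε ≤ λ < λ′ < 1 and all x ∈ E: (λ′−λ)^{n−1}·‖φ(g₁,…,g_{n−1})(x,…,x)‖_λ ≤ (n−1)^{n−1}·c₁·⋯·c_{n−1}·‖x‖_{λ′}^n (where for n = 1 the left side is ‖x‖_λ, the empty product of constants is 1, and (n−1)^{n−1} = 0^0 = 1). -/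
import Mathlib

/-- Plane rooted full binary trees whose internal nodes are labelled by bilinear maps
`E → E → E`. -/
inductive LTree (E : Type*) : Type _ where
  | leaf : LTree E
  | node : (E → E → E) → LTree E → LTree E → LTree E

/-- The number of leaves of a labelled binary tree. -/
def LTree.leaves {E : Type*} : LTree E → ℕ
  | .leaf => 1
  | .node _ l r => l.leaves + r.leaves

/-- The `n`-linear map `φ(B) : E^n → E` obtained by composing the labels along the tree:
the one-leaf tree gives the identity, and a node labelled `b` with subtrees `l`, `r`
gives `b(l(x₁,…,x_k), r(x_{k+1},…,xₙ))`.  Arguments are `x 0, …, x (leaves - 1)`. -/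
def LTree.eval {E : Type*} : LTree E → (ℕ → E) → E
  | .leaf, x => x 0
  | .node b l r, x => b (l.eval x) (r.eval fun i => x (i + l.leaves))

/-- `LTree.Bounded P t B` says that every internal node label `b` of `t` satisfies
`P b c` for some constant `c ≥ 0`, and `B` is the product of these constants
(the empty product being `1`). -/
inductive LTree.Bounded {E : Type*} (P : (E → E → E) → ℝ → Prop) : LTree E → ℝ → Prop
  | leaf : LTree.Bounded P .leaf 1
  | node {b : E → E → E} {c : ℝ} {l r : LTree E} {bl br : ℝ} :
      P b c → LTree.Bounded P l bl → LTree.Bounded P r br →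
      LTree.Bounded P (.node b l r) (c * bl * br)

lemma LTree.leaves_pos {E : Type*} (t : LTree E) : 1 ≤ t.leaves := by
  induction t with
  | leaf => simp [LTree.leaves]
  | node b l r ihl ihr => simp only [LTree.leaves]; omega

lemma LTree.Bounded.nonneg {E : Type*} {P : (E → E → E) → ℝ → Prop} {t : LTree E} {C : ℝ}
    (h : LTree.Bounded P t C) (hP : ∀ b c, P b c → 0 ≤ c) : 0 ≤ C := by
  induction h with
  | leaf => norm_num
  | node hb hl hr ihl ihr => exact mul_nonneg (mul_nonneg (hP _ _ hb) ihl) ihr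

lemma helper_pow (p : ℕ) (M s a R : ℝ) (hM : (p : ℝ) ≤ M)
    (hR : 0 ≤ R) (h : (M * s) ^ p * a ≤ (p : ℝ) ^ p * R) : s ^ p * a ≤ R := by
  cases p with
  | zero => simpa using h
  | succ q =>
    have hM0 : (0 : ℝ) < M := lt_of_lt_of_le (by push_cast; positivity) hM
    have h1 : ((q : ℝ) + 1) ^ (q + 1) ≤ M ^ (q + 1) :=
      pow_le_pow_left₀ (by positivity) (by push_cast at hM ⊢; linarith) _
    have h2 : M ^ (q + 1) * (s ^ (q + 1) * a) ≤ M ^ (q + 1) * R := by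
      have := h
      rw [mul_pow] at this
      push_cast at this
      nlinarith [pow_pos hM0 (q+1)]
    exact le_of_mul_le_mul_left h2 (pow_pos hM0 (q + 1))

lemma palamodov_aux
    {E : Type} [AddCommGroup E] [Module ℝ E]
    (N : ℝ → Seminorm ℝ E)
    (hmono : ∀ lam lam' : ℝ, 0 < lam → lam ≤ lam' → lam' < 1 → ∀ x, N lam x ≤ N lam' x)
    (ε : ℝ) (hε0 : 0 < ε) (hε1 : ε < 1)
    {t : LTree E} {C : ℝ}
    (hC : LTree.Bounded
      (fun b c => 0 ≤ c ∧
        (∀ y, IsLinearMap ℝ fun x => b x y) ∧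
        (∀ x, IsLinearMap ℝ (b x)) ∧
        (∀ x y lam lam', 1 - ε ≤ lam → lam < lam' → lam' < 1 →
          (lam' - lam) * N lam (b x y) ≤ c * N lam' x * N lam' y)) t C) :
    ∀ lam lam' : ℝ, 1 - ε ≤ lam → lam ≤ lam' → lam' < 1 → ∀ x : E,
    (lam' - lam) ^ (t.leaves - 1) * N lam (t.eval fun _ => x) ≤
      ((t.leaves : ℝ) - 1) ^ (t.leaves - 1) * C * (N lam' x) ^ t.leaves := by
  induction hC with
  | leaf =>
    intro lam lam' h1 h2 h3 x
    simp only [LTree.leaves, LTree.eval, pow_zero, Nat.cast_one]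
    have := hmono lam lam' (by linarith) h2 h3 x
    simpa using this
  | @node b c l r bl br hb hl hr ihl ihr =>
    intro lam lam' h1 h2 h3 x
    set k := l.leaves with hkdef
    set m := r.leaves with hmdef
    have hk : 1 ≤ k := l.leaves_pos
    have hm : 1 ≤ m := r.leaves_pos
    have hlv : (LTree.node b l r).leaves = k + m := rfl
    have hev : (LTree.node b l r).eval (fun _ => x) =
        b (l.eval fun _ => x) (r.eval fun _ => x) := rfl
    rw [hlv, hev]
    set u := l.eval fun _ => x with hu
    set v := r.eval fun _ => x with hv
    have hbl0 : 0 ≤ bl := hl.nonneg (fun _ _ h => h.1)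
    have hbr0 : 0 ≤ br := hr.nonneg (fun _ _ h => h.1)
    have hc0 : 0 ≤ c := hb.1
    have hn2 : 2 ≤ k + m := by omega
    have hnr : (2 : ℝ) ≤ (k : ℝ) + (m : ℝ) := by exact_mod_cast hn2
    rcases eq_or_lt_of_le h2 with heq | hlt
    · -- lam = lam' : LHS = 0
      rw [← heq]
      have hz : (lam - lam) ^ (k + m - 1) = 0 := by
        rw [sub_self]; exact zero_pow (by omega)
      rw [hz, zero_mul]
      have hb1 : (0:ℝ) ≤ ((k + m : ℕ) : ℝ) - 1 := by push_cast; linarith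
      exact mul_nonneg (mul_nonneg (pow_nonneg hb1 _)
        (mul_nonneg (mul_nonneg hc0 hbl0) hbr0))
        (pow_nonneg (apply_nonneg _ _) _)
    · -- main case
      set nr : ℝ := (k : ℝ) + (m : ℝ) with hnrdef
      have hnr1 : (1 : ℝ) ≤ nr - 1 := by linarith
      set s : ℝ := (lam' - lam) / (nr - 1) with hsdef
      have hs : 0 < s := div_pos (by linarith) (by linarith)
      set μ : ℝ := lam + s with hmudef
      have hmu1 : μ - lam = s := by rw [hmudef]; ring
      have hd : lam' - lam = (nr - 1) * s := by
        have h0 : nr - 1 ≠ 0 := by linarith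
        rw [hsdef]; field_simp
      have hmu2 : lam' - μ = (nr - 2) * s := by
        have : (nr - 2) * s = (nr - 1) * s - s := by ring
        rw [hmudef]; linarith
      have hmule : μ ≤ lam' := by
        have h0 : 0 ≤ (nr - 2) * s := mul_nonneg (by linarith) hs.le
        linarith
      have hmuone : μ < 1 := lt_of_le_of_lt hmule h3
      have hmueps : 1 - ε ≤ μ := by linarith
      have hXk : (0:ℝ) ≤ (N lam' x) ^ k := pow_nonneg (apply_nonneg _ _) _
      have hXm : (0:ℝ) ≤ (N lam' x) ^ m := pow_nonneg (apply_nonneg _ _) _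
      have hk' : (1:ℝ) ≤ (k:ℝ) := by exact_mod_cast hk
      have hm' : (1:ℝ) ≤ (m:ℝ) := by exact_mod_cast hm
      -- root bound
      have hroot : s * N lam (b u v) ≤ c * N μ u * N μ v := by
        have := hb.2.2.2 u v lam μ h1 (by linarith) hmuone
        rwa [hmu1] at this
      -- subtree bounds via helper
      have Hl : s ^ (k - 1) * N μ u ≤ bl * (N lam' x) ^ k := by
        refine helper_pow (k - 1) (nr - 2) s (N μ u) _ ?_ (mul_nonneg hbl0 hXk) ?_
        · rw [Nat.cast_sub hk, hnrdef]; push_cast; linarith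
        · have hIH := ihl μ lam' hmueps hmule h3 x
          rw [hmu2] at hIH
          rw [Nat.cast_sub hk]
          exact hIH.trans_eq (by ring)
      have Hr : s ^ (m - 1) * N μ v ≤ br * (N lam' x) ^ m := by
        refine helper_pow (m - 1) (nr - 2) s (N μ v) _ ?_ (mul_nonneg hbr0 hXm) ?_
        · rw [Nat.cast_sub hm, hnrdef]; push_cast; linarith
        · have hIH := ihr μ lam' hmueps hmule h3 x
          rw [hmu2] at hIH
          rw [Nat.cast_sub hm]
          exact hIH.trans_eq (by ring)
      have key : s ^ (k + m - 1) * N lam (b u v) ≤ c * bl * br * (N lam' x) ^ (k + m) := by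
        have hsplit : k + m - 1 = (k - 1) + (m - 1) + 1 := by omega
        rw [hsplit, pow_add, pow_add, pow_one]
        have h01 : (0:ℝ) ≤ s ^ (k-1) * N μ u := mul_nonneg (pow_nonneg hs.le _) (apply_nonneg _ _)
        have h02 : (0:ℝ) ≤ s ^ (m-1) * N μ v := mul_nonneg (pow_nonneg hs.le _) (apply_nonneg _ _)
        have h03 : (0:ℝ) ≤ bl * (N lam' x) ^ k := mul_nonneg hbl0 hXk
        have h05 : (0:ℝ) ≤ c * (bl * (N lam' x) ^ k) := mul_nonneg hc0 h03
        calc s ^ (k-1) * s ^ (m-1) * s * N lam (b u v)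
            = s ^ (k-1) * s ^ (m-1) * (s * N lam (b u v)) := by ring
          _ ≤ s ^ (k-1) * s ^ (m-1) * (c * N μ u * N μ v) := by
              apply mul_le_mul_of_nonneg_left hroot
              exact mul_nonneg (pow_nonneg hs.le _) (pow_nonneg hs.le _)
          _ = c * (s ^ (k-1) * N μ u) * (s ^ (m-1) * N μ v) := by ring
          _ ≤ c * (bl * (N lam' x) ^ k) * (br * (N lam' x) ^ m) :=
              mul_le_mul (mul_le_mul_of_nonneg_left Hl hc0) Hr h02 h05
          _ = c * bl * br * (N lam' x) ^ (k + m) := by rw [pow_add]; ring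
      calc (lam' - lam) ^ (k + m - 1) * N lam (b u v)
          = (nr - 1) ^ (k + m - 1) * (s ^ (k + m - 1) * N lam (b u v)) := by
            rw [hd, mul_pow]; ring
        _ ≤ (nr - 1) ^ (k + m - 1) * (c * bl * br * (N lam' x) ^ (k + m)) := by
            apply mul_le_mul_of_nonneg_left key
            exact pow_nonneg (by linarith) _
        _ = ((↑(k + m) : ℝ) - 1) ^ (k + m - 1) * (c * bl * br) * (N lam' x) ^ (k + m) := by
            rw [hnrdef]; push_cast; ring

/-- Let `E` be a real vector space with a monotone family of
seminorms `(‖·‖_λ)_{0<λ<1}` (a Palamodov space), `ε ∈ (0,1)`, and `t` a plane rooted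
full binary tree with `n ≥ 1` leaves whose internal nodes carry bilinear maps
`gᵢ : E × E → E` satisfying `(λ'-λ)‖gᵢ(x,y)‖_λ ≤ cᵢ‖x‖_{λ'}‖y‖_{λ'}` for
`1-ε ≤ λ < λ' < 1`.  Then for all such `λ < λ'` and all `x ∈ E`,
`(λ'-λ)^(n-1) ‖t(x,…,x)‖_λ ≤ (n-1)^(n-1)·c₁⋯c_{n-1}·‖x‖_{λ'}^n`
(for `n = 1` the empty product is `1` and `0^0 = 1`). -/
theorem tree_composition_palamodov_bound
    {E : Type} [AddCommGroup E] [Module ℝ E]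
    (N : ℝ → Seminorm ℝ E)
    (hmono : ∀ lam lam' : ℝ, 0 < lam → lam ≤ lam' → lam' < 1 → ∀ x, N lam x ≤ N lam' x)
    (ε : ℝ) (hε0 : 0 < ε) (hε1 : ε < 1)
    (t : LTree E) (C : ℝ) (hn : 1 ≤ t.leaves)
    (hC : LTree.Bounded
      (fun b c => 0 ≤ c ∧
        (∀ y, IsLinearMap ℝ fun x => b x y) ∧
        (∀ x, IsLinearMap ℝ (b x)) ∧
        (∀ x y lam lam', 1 - ε ≤ lam → lam < lam' → lam' < 1 →
          (lam' - lam) * N lam (b x y) ≤ c * N lam' x * N lam' y)) t C)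
    (lam lam' : ℝ) (h1 : 1 - ε ≤ lam) (h2 : lam < lam') (h3 : lam' < 1) (x : E) :
    (lam' - lam) ^ (t.leaves - 1) * N lam (t.eval fun _ => x) ≤
      ((t.leaves : ℝ) - 1) ^ (t.leaves - 1) * C * (N lam' x) ^ t.leaves := by
  exact palamodov_aux N hmono ε hε0 hε1 hC lam lam' h1 h2.le h3 x
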